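/- arXiv:1805.01043 — 7 statements merged into one kernel-verified Lean document; each statement's English description precedes it below -/
import Mathlib

section
/- Let A, B be complex numbers with |A|>1, |B|≤1, and let 0 ≤ α < 1. Suppose f is analytic on the unit disc with f(0)=0, f'(0)=1 and zf'(z)/f(z) ≺ (1+Az)/(1+Bz), and g is analytic with g(0)=0, g'(0)=1 and 1 + zg''(z)/g'(z) ≺ (1+Az)/(1+Bz). Define T_g f(z) = ∫₀^z f(s) g'(s) ds. Then Re(1 + z·(T_g f)''(z)/(T_g f)'(z)) > α for all |z| < r_c, where r_c = (2−α)/(2|A|) if B = 0, and r_c = (|B−A| − |(α−1)B − A|)/(α|B|² − 2Re(A·conj(B))) if B ≠ 0. -/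
/-!
By the product rule, `1 + z T''/T' = z f'/f + (1 + z g''/g')`, and by subordination and the
Schwarz lemma each summand is `(1 + A w)/(1 + B w)` for some `‖w‖ ≤ ‖z‖`. So it suffices that
`α/2 < Re ((1 + A w)/(1 + B w))` for `‖w‖ < r_c`. Clearing the denominator and bounding
`Re ((A + (1 - α) B) w) ≥ -‖A + (1 - α) B‖ ‖w‖`, this follows from the positivity of the quadratic
`(1 - α/2) - ‖A + (1 - α) B‖ t - (α ‖B‖²/2 - Re (A B̄)) t²` below its positive root, which is
`r_c` (when `B = 0` the quadratic is linear).
-/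

open Complex Metric Filter Topology

lemma quadratic_pos_of_lt_root {a b s c t : ℝ} (hb : 0 < b) (hs : 0 ≤ s)
    (hD : s ^ 2 = b ^ 2 - 4 * a * c) (ht0 : 0 ≤ t) (ht : t < (b - s) / (2 * c)) :
    0 < a - s * t - c * t ^ 2 := by
  set r := (b - s) / (2 * c) with hr
  have hc : c ≠ 0 := by
    rintro rfl
    simp only [mul_zero, div_zero, r] at ht
    linarith
  have h2cr : 2 * c * r = b - s := by rw [hr]; field_simp
  have hroot : a = s * r + c * r ^ 2 := by
    have h4 : 4 * c * (c * r ^ 2 + s * r - a) = 0 := by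
      linear_combination (2 * c * r + s + b) * h2cr - hD
    linarith [(mul_eq_zero.mp h4).resolve_left (by positivity)]
  have hrt : 0 < r - t := by linarith
  rw [show a - s * t - c * t ^ 2 = (r - t) * (s + c * (r + t)) by linear_combination hroot]
  refine mul_pos hrt ?_
  rcases hc.lt_or_gt with hneg | hpos
  · nlinarith [mul_pos (neg_pos.mpr hneg) hrt]
  · nlinarith [mul_nonneg hpos.le ht0]

lemma re_div_sub_eq {A B w : ℂ} (hw : 1 + B * w ≠ 0) (β : ℝ) :
    ((1 + A * w) / (1 + B * w)).re - β =
      ((1 - β) + ((A + (1 - 2 * β) * B) * w).re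
        + ((A * starRingEnd ℂ B).re - β * ‖B‖ ^ 2) * ‖w‖ ^ 2) / normSq (1 + B * w) := by
  have hn : normSq (1 + B * w) ≠ 0 := normSq_eq_zero.not.mpr hw
  rw [div_re, ← add_div, eq_div_iff hn, sub_mul, div_mul_cancel₀ _ hn]
  simp only [← normSq_eq_norm_sq, normSq_apply, add_re, add_im, mul_re, mul_im, one_re, one_im,
    sub_re, sub_im, ofReal_re, ofReal_im, conj_re, conj_im, re_ofNat, im_ofNat]
  ring

noncomputable def convexityRadius (A B : ℂ) (α : ℝ) : ℝ :=
  if B = 0 then (2 - α) / (2 * ‖A‖)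
  else (‖B - A‖ - ‖((α : ℂ) - 1) * B - A‖) /
    (α * ‖B‖^2 - 2 * (A * (starRingEnd ℂ) B).re)

lemma half_lt_re_one_add_mul_of_norm_lt {A w : ℂ} (hA : 0 < ‖A‖) {α : ℝ}
    (hw : ‖w‖ < (2 - α) / (2 * ‖A‖)) : α / 2 < (1 + A * w).re := by
  have hAw : ‖A * w‖ < 1 - α / 2 := by
    rw [norm_mul]
    rw [lt_div_iff₀ (by positivity)] at hw
    linarith
  have := neg_abs_le (A * w).re
  have := abs_re_le_norm (A * w)
  simp only [add_re, one_re]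
  linarith

lemma norm_sq_sub_eq_discriminant (A B : ℂ) (α : ℝ) :
    ‖((α : ℂ) - 1) * B - A‖ ^ 2 =
      ‖B - A‖ ^ 2 - 4 * (1 - α / 2) * (α * ‖B‖ ^ 2 / 2 - (A * starRingEnd ℂ B).re) := by
  simp only [← normSq_eq_norm_sq, normSq_apply, sub_re, sub_im, mul_re, mul_im, ofReal_re,
    ofReal_im, one_re, one_im, conj_re, conj_im]
  ring

lemma half_lt_re_div_of_norm_lt_convexityRadius {A B w : ℂ} (hA : 1 < ‖A‖) (hB : ‖B‖ ≤ 1)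
    {α : ℝ} (hw1 : ‖w‖ < 1) (hw : ‖w‖ < convexityRadius A B α) :
    α / 2 < ((1 + A * w) / (1 + B * w)).re := by
  unfold convexityRadius at hw
  split_ifs at hw with hB0
  · simpa [hB0] using half_lt_re_one_add_mul_of_norm_lt (by linarith) hw
  have hBw : 1 + B * w ≠ 0 := by
    intro h
    have : ‖B * w‖ < 1 := by rw [norm_mul]; nlinarith [norm_nonneg B, norm_nonneg w]
    rw [eq_neg_of_add_eq_zero_right h, norm_neg, norm_one] at this
    exact this.false
  have hBA : 0 < ‖B - A‖ := norm_pos_iff.mpr fun h ↦ by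
    rw [sub_eq_zero.mp h] at hB; linarith
  have hlin :
      -(‖((α : ℂ) - 1) * B - A‖ * ‖w‖) ≤ ((A + (1 - 2 * ((α / 2 : ℝ) : ℂ)) * B) * w).re := by
    have hcoef : A + (1 - 2 * ((α / 2 : ℝ) : ℂ)) * B = -(((α : ℂ) - 1) * B - A) := by
      push_cast; ring
    rw [hcoef]
    have h := abs_re_le_norm (-(((α : ℂ) - 1) * B - A) * w)
    rw [norm_mul, norm_neg] at h
    exact neg_le_of_abs_le h
  have hquad := quadratic_pos_of_lt_root hBA (norm_nonneg _)
    (norm_sq_sub_eq_discriminant A B α) (norm_nonneg w)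
    (by convert hw using 2; ring)
  rw [← sub_pos, re_div_sub_eq hBw]
  refine div_pos ?_ (normSq_pos.mpr hBw)
  linarith

lemma half_lt_re_of_subordinate {A B : ℂ} (hA : 1 < ‖A‖) (hB : ‖B‖ ≤ 1) {α : ℝ} {ω : ℂ → ℂ}
    (hωd : DifferentiableOn ℂ ω (ball 0 1)) (hω0 : ω 0 = 0)
    (hωm : ∀ z ∈ ball (0 : ℂ) 1, ω z ∈ ball (0 : ℂ) 1) {z : ℂ} (hz : z ∈ ball (0 : ℂ) 1)
    (hr : ‖z‖ < convexityRadius A B α) :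
    α / 2 < ((1 + A * ω z) / (1 + B * ω z)).re := by
  have hschwarz : ‖ω z‖ ≤ ‖z‖ :=
    Complex.norm_le_norm_of_mapsTo_ball hωd (fun y hy ↦ ball_subset_closedBall (hωm y hy)) hω0
      (mem_ball_zero_iff.mp hz)
  exact half_lt_re_div_of_norm_lt_convexityRadius hA hB (mem_ball_zero_iff.mp (hωm z hz))
    (hschwarz.trans_lt hr)

lemma deriv_deriv_eq_of_hasDerivAt_mul {𝕜 : Type*} [NontriviallyNormedField 𝕜]
    {T f h : 𝕜 → 𝕜} {U : Set 𝕜} {z : 𝕜} (hU : U ∈ 𝓝 z)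
    (hT : ∀ y ∈ U, HasDerivAt T (f y * h y) y) (hf : DifferentiableAt 𝕜 f z)
    (hh : DifferentiableAt 𝕜 h z) :
    deriv (deriv T) z = deriv f z * h z + f z * deriv h z := by
  have hT' : deriv T =ᶠ[𝓝 z] fun y ↦ f y * h y := eventually_of_mem hU fun y hy ↦ (hT y hy).deriv
  rw [hT'.deriv_eq]
  exact deriv_mul hf hh

lemma one_add_mul_div_mul_eq {K : Type*} [Field K] {z F F' G G' : K} (hF : F ≠ 0) (hG : G ≠ 0) :
    1 + z * (F' * G + F * G') / (F * G) = z * F' / F + (1 + z * G' / G) := by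
  field_simp
  ring

theorem stmt1_general (A B : ℂ) (hA : 1 < ‖A‖) (hB : ‖B‖ ≤ 1)
    (α : ℝ) (hα1 : α < 1)
    (f : ℂ → ℂ) (hfd : DifferentiableOn ℂ f (ball (0:ℂ) 1))
    (hfne : ∀ z ∈ ball (0:ℂ) 1, z ≠ 0 → f z ≠ 0)
    (hfsub : ∃ ω : ℂ → ℂ, DifferentiableOn ℂ ω (ball (0:ℂ) 1) ∧ ω 0 = 0 ∧
      (∀ z ∈ ball (0:ℂ) 1, ω z ∈ ball (0:ℂ) 1) ∧
      ∀ z ∈ ball (0:ℂ) 1, z ≠ 0 →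
        z * deriv f z / f z = (1 + A * ω z) / (1 + B * ω z))
    (g : ℂ → ℂ) (hgd : DifferentiableOn ℂ g (ball (0:ℂ) 1))
    (hgne : ∀ z ∈ ball (0:ℂ) 1, deriv g z ≠ 0)
    (hgsub : ∃ ω : ℂ → ℂ, DifferentiableOn ℂ ω (ball (0:ℂ) 1) ∧ ω 0 = 0 ∧
      (∀ z ∈ ball (0:ℂ) 1, ω z ∈ ball (0:ℂ) 1) ∧
      ∀ z ∈ ball (0:ℂ) 1,
        1 + z * deriv (deriv g) z / deriv g z = (1 + A * ω z) / (1 + B * ω z))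
    (T : ℂ → ℂ) (hT : ∀ z ∈ ball (0:ℂ) 1, HasDerivAt T (f z * deriv g z) z) :
    ∀ z ∈ ball (0:ℂ) 1,
      ‖z‖ < (if B = 0 then (2 - α) / (2 * ‖A‖)
        else (‖B - A‖ - ‖((α : ℂ) - 1) * B - A‖) /
          (α * ‖B‖^2 - 2 * (A * (starRingEnd ℂ) B).re)) →
      α < (1 + z * deriv (deriv T) z / deriv T z).re := by
  intro z hz hr
  rcases eq_or_ne z 0 with rfl | hz0
  · simpa using hα1
  obtain ⟨ω₁, hω₁d, hω₁0, hω₁m, hω₁⟩ := hfsub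
  obtain ⟨ω₂, hω₂d, hω₂0, hω₂m, hω₂⟩ := hgsub
  have hP := half_lt_re_of_subordinate hA hB hω₁d hω₁0 hω₁m hz hr
  have hQ := half_lt_re_of_subordinate hA hB hω₂d hω₂0 hω₂m hz hr
  have hU : ball (0 : ℂ) 1 ∈ 𝓝 z := isOpen_ball.mem_nhds hz
  have hg' : DifferentiableAt ℂ (deriv g) z :=
    ((hgd.analyticOnNhd isOpen_ball).deriv z hz).differentiableAt
  rw [(hT z hz).deriv, deriv_deriv_eq_of_hasDerivAt_mul hU hT (hfd.differentiableAt hU) hg',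
    one_add_mul_div_mul_eq (hfne z hz hz0) (hgne z hz), hω₁ z hz hz0, hω₂ z hz, add_re]
  linarith

theorem stmt1 (A B : ℂ) (hA : 1 < ‖A‖) (hB : ‖B‖ ≤ 1)
    (α : ℝ) (hα0 : 0 ≤ α) (hα1 : α < 1)
    (f : ℂ → ℂ) (hfd : DifferentiableOn ℂ f (ball (0:ℂ) 1))
    (hf0 : f 0 = 0) (hf1 : deriv f 0 = 1)
    (hfne : ∀ z ∈ ball (0:ℂ) 1, z ≠ 0 → f z ≠ 0)
    (hfsub : ∃ ω : ℂ → ℂ, DifferentiableOn ℂ ω (ball (0:ℂ) 1) ∧ ω 0 = 0 ∧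
      (∀ z ∈ ball (0:ℂ) 1, ω z ∈ ball (0:ℂ) 1) ∧
      ∀ z ∈ ball (0:ℂ) 1, z ≠ 0 →
        z * deriv f z / f z = (1 + A * ω z) / (1 + B * ω z))
    (g : ℂ → ℂ) (hgd : DifferentiableOn ℂ g (ball (0:ℂ) 1))
    (hg0 : g 0 = 0) (hg1 : deriv g 0 = 1)
    (hgne : ∀ z ∈ ball (0:ℂ) 1, deriv g z ≠ 0)
    (hgsub : ∃ ω : ℂ → ℂ, DifferentiableOn ℂ ω (ball (0:ℂ) 1) ∧ ω 0 = 0 ∧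
      (∀ z ∈ ball (0:ℂ) 1, ω z ∈ ball (0:ℂ) 1) ∧
      ∀ z ∈ ball (0:ℂ) 1,
        1 + z * deriv (deriv g) z / deriv g z = (1 + A * ω z) / (1 + B * ω z))
    (T : ℂ → ℂ) (hT : ∀ z ∈ ball (0:ℂ) 1, HasDerivAt T (f z * deriv g z) z) :
    ∀ z ∈ ball (0:ℂ) 1,
      ‖z‖ < (if B = 0 then (2 - α) / (2 * ‖A‖)
        else (‖B - A‖ - ‖((α : ℂ) - 1) * B - A‖) /
          (α * ‖B‖^2 - 2 * (A * (starRingEnd ℂ) B).re)) →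
      α < (1 + z * deriv (deriv T) z / deriv T z).re :=
  stmt1_general A B hA hB α hα1 f hfd hfne hfsub g hgd hgne hgsub T hT
end

section
/- Suppose f is analytic on the unit disc with f(0)=0, f'(0)=1, f nonvanishing on the punctured disc, satisfying Re(zf'(z)/f(z)) < 3/2 for all |z|<1, and g is analytic with g(0)=0, g'(0)=1, g' nonvanishing, satisfying Re(1 + zg''(z)/g'(z)) < 3/2 for all |z|<1, where moreover zf'/f ≺ (1+2z)/(1+z) and 1+zg''/g' ≺ (1+2z)/(1+z). Then for 0 ≤ α < 1, T_g f(z) = ∫₀^z f(s)g'(s)ds satisfies Re(1 + z(T_g f)''(z)/(T_g f)'(z)) > α for |z| < (α−2)/(α−4) = (2−α)/(4−α). -/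
/-!
Since `(T_g f)' = f g'`, the quantity `1 + z (T_g f)''/(T_g f)'` splits as
`z f'/f + (1 + z g''/g')`. By subordination each summand equals `(1 + 2ω(z))/(1 + ω(z))` for a
Schwarz function `ω`, and `|ω(z)| ≤ |z| = r` by Schwarz's lemma; writing
`(1 + 2w)/(1 + w) = 2 - 1/(1 + w)` gives real part at least `2 - 1/(1 - r)`. The sum is thus at
least `4 - 2/(1 - r)`, which exceeds `α` exactly when `r < (2 - α)/(4 - α)`.
-/

open Complex Metric Filter Topology

lemma two_sub_inv_one_sub_le_re_div {w : ℂ} {r : ℝ} (hw : ‖w‖ ≤ r) (hr : r < 1) :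
    2 - 1 / (1 - r) ≤ ((1 + 2 * w) / (1 + w)).re := by
  have hr1 : 0 < 1 - r := by linarith
  have hnorm : 1 - r ≤ ‖1 + w‖ := by
    calc 1 - r ≤ ‖(1 : ℂ)‖ - ‖-w‖ := by rw [norm_one, norm_neg]; linarith
      _ ≤ ‖1 + w‖ := by simpa using norm_sub_norm_le (1 : ℂ) (-w)
  have hne : 1 + w ≠ 0 := norm_pos_iff.mp (hr1.trans_le hnorm)
  have hsplit : (1 + 2 * w) / (1 + w) = 2 - 1 / (1 + w) := by
    field_simp
    ring
  have hinv : (1 / (1 + w)).re ≤ 1 / (1 - r) :=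
    calc (1 / (1 + w)).re ≤ ‖1 / (1 + w)‖ := re_le_norm _
      _ = 1 / ‖1 + w‖ := by simp
      _ ≤ 1 / (1 - r) := one_div_le_one_div_of_le hr1 hnorm
  rw [hsplit, sub_re, re_ofNat]
  linarith

lemma two_sub_inv_one_sub_norm_le_re_div_of_schwarz {ω : ℂ → ℂ}
    (hd : DifferentiableOn ℂ ω (ball 0 1)) (h0 : ω 0 = 0)
    (hmaps : ∀ z ∈ ball (0 : ℂ) 1, ω z ∈ ball (0 : ℂ) 1) {z : ℂ} (hz : z ∈ ball (0 : ℂ) 1) :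
    2 - 1 / (1 - ‖z‖) ≤ ((1 + 2 * ω z) / (1 + ω z)).re := by
  have hschwarz : ‖ω z‖ ≤ ‖z‖ := by
    simpa using norm_le_norm_of_mapsTo_ball hd (fun w hw => ball_subset_closedBall (hmaps w hw))
      h0 (z := z) (by simpa using hz)
  exact two_sub_inv_one_sub_le_re_div hschwarz (mem_ball_zero_iff.mp hz)

lemma one_add_mul_deriv_deriv_div_deriv_eq {𝕜 : Type*} [NontriviallyNormedField 𝕜]
    {T f h : 𝕜 → 𝕜} {z : 𝕜} (hT : ∀ᶠ w in 𝓝 z, HasDerivAt T (f w * h w) w)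
    (hf : DifferentiableAt 𝕜 f z) (hh : DifferentiableAt 𝕜 h z) (hfz : f z ≠ 0) (hhz : h z ≠ 0) :
    1 + z * deriv (deriv T) z / deriv T z = z * deriv f z / f z + (1 + z * deriv h z / h z) := by
  have hT' : deriv T =ᶠ[𝓝 z] fun w => f w * h w := hT.mono fun w hw => hw.deriv
  have hT'' : deriv (deriv T) z = deriv f z * h z + f z * deriv h z := by
    rw [hT'.deriv_eq]
    exact (hf.hasDerivAt.mul hh.hasDerivAt).deriv
  rw [hT'', hT'.eq_of_nhds]
  field_simp
  ring

lemma lt_two_mul_two_sub_inv_one_sub_of_lt_div {α r : ℝ} (hα : α < 4) (hr1 : r < 1)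
    (hr : r < (2 - α) / (4 - α)) : α < 2 * (2 - 1 / (1 - r)) := by
  have h4 : 0 < 4 - α := by linarith
  have h1 : 0 < 1 - r := by linarith
  rw [lt_div_iff₀ h4] at hr
  have : 2 / (1 - r) < 4 - α := by
    rw [div_lt_iff₀ h1]
    linarith
  linarith [mul_one_div (2 : ℝ) (1 - r)]

theorem stmt2_general (α : ℝ) (hα1 : α < 1)
    (f : ℂ → ℂ) (hfd : DifferentiableOn ℂ f (ball (0:ℂ) 1))
    (hfne : ∀ z ∈ ball (0:ℂ) 1, z ≠ 0 → f z ≠ 0)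
    (hfsub : ∃ ω : ℂ → ℂ, DifferentiableOn ℂ ω (ball (0:ℂ) 1) ∧ ω 0 = 0 ∧
      (∀ z ∈ ball (0:ℂ) 1, ω z ∈ ball (0:ℂ) 1) ∧
      ∀ z ∈ ball (0:ℂ) 1, z ≠ 0 →
        z * deriv f z / f z = (1 + 2 * ω z) / (1 + ω z))
    (g : ℂ → ℂ) (hgd : DifferentiableOn ℂ g (ball (0:ℂ) 1))
    (hgne : ∀ z ∈ ball (0:ℂ) 1, deriv g z ≠ 0)
    (hgsub : ∃ ω : ℂ → ℂ, DifferentiableOn ℂ ω (ball (0:ℂ) 1) ∧ ω 0 = 0 ∧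
      (∀ z ∈ ball (0:ℂ) 1, ω z ∈ ball (0:ℂ) 1) ∧
      ∀ z ∈ ball (0:ℂ) 1,
        1 + z * deriv (deriv g) z / deriv g z = (1 + 2 * ω z) / (1 + ω z))
    (T : ℂ → ℂ) (hT : ∀ z ∈ ball (0:ℂ) 1, HasDerivAt T (f z * deriv g z) z) :
    ∀ z ∈ ball (0:ℂ) 1, ‖z‖ < (2 - α) / (4 - α) →
      α < (1 + z * deriv (deriv T) z / deriv T z).re := by
  intro z hz hzr
  obtain ⟨ω₁, hω₁d, hω₁0, hω₁maps, hω₁⟩ := hfsub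
  obtain ⟨ω₂, hω₂d, hω₂0, hω₂maps, hω₂⟩ := hgsub
  rcases eq_or_ne z 0 with rfl | hz0
  · simpa using hα1
  have hnhds : ball (0 : ℂ) 1 ∈ 𝓝 z := isOpen_ball.mem_nhds hz
  have hg' : DifferentiableAt ℂ (deriv g) z :=
    ((hgd.analyticOnNhd isOpen_ball).deriv z hz).differentiableAt
  rw [one_add_mul_deriv_deriv_div_deriv_eq (eventually_of_mem hnhds hT)
      (hfd.differentiableAt hnhds) hg' (hfne z hz hz0) (hgne z hz),
    hω₁ z hz hz0, hω₂ z hz, add_re]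
  have h₁ := two_sub_inv_one_sub_norm_le_re_div_of_schwarz hω₁d hω₁0 hω₁maps hz
  have h₂ := two_sub_inv_one_sub_norm_le_re_div_of_schwarz hω₂d hω₂0 hω₂maps hz
  have hα := lt_two_mul_two_sub_inv_one_sub_of_lt_div (by linarith) (mem_ball_zero_iff.mp hz) hzr
  linarith

theorem stmt2 (α : ℝ) (hα0 : 0 ≤ α) (hα1 : α < 1)
    (f : ℂ → ℂ) (hfd : DifferentiableOn ℂ f (ball (0:ℂ) 1))
    (hf0 : f 0 = 0) (hf1 : deriv f 0 = 1)
    (hfne : ∀ z ∈ ball (0:ℂ) 1, z ≠ 0 → f z ≠ 0)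
    (hfre : ∀ z ∈ ball (0:ℂ) 1, z ≠ 0 → (z * deriv f z / f z).re < 3 / 2)
    (hfsub : ∃ ω : ℂ → ℂ, DifferentiableOn ℂ ω (ball (0:ℂ) 1) ∧ ω 0 = 0 ∧
      (∀ z ∈ ball (0:ℂ) 1, ω z ∈ ball (0:ℂ) 1) ∧
      ∀ z ∈ ball (0:ℂ) 1, z ≠ 0 →
        z * deriv f z / f z = (1 + 2 * ω z) / (1 + ω z))
    (g : ℂ → ℂ) (hgd : DifferentiableOn ℂ g (ball (0:ℂ) 1))
    (hg0 : g 0 = 0) (hg1 : deriv g 0 = 1)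
    (hgne : ∀ z ∈ ball (0:ℂ) 1, deriv g z ≠ 0)
    (hgre : ∀ z ∈ ball (0:ℂ) 1, (1 + z * deriv (deriv g) z / deriv g z).re < 3 / 2)
    (hgsub : ∃ ω : ℂ → ℂ, DifferentiableOn ℂ ω (ball (0:ℂ) 1) ∧ ω 0 = 0 ∧
      (∀ z ∈ ball (0:ℂ) 1, ω z ∈ ball (0:ℂ) 1) ∧
      ∀ z ∈ ball (0:ℂ) 1,
        1 + z * deriv (deriv g) z / deriv g z = (1 + 2 * ω z) / (1 + ω z))
    (T : ℂ → ℂ) (hT : ∀ z ∈ ball (0:ℂ) 1, HasDerivAt T (f z * deriv g z) z) :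
    ∀ z ∈ ball (0:ℂ) 1, ‖z‖ < (2 - α) / (4 - α) →
      α < (1 + z * deriv (deriv T) z / deriv T z).re :=
  stmt2_general α hα1 f hfd hfne hfsub g hgd hgne hgsub T hT
end

section
/- Let 0 ≤ α < 1 and γ ≥ 1. If f is starlike of order α (i.e., analytic, f(0)=0, f'(0)=1, f nonvanishing on the punctured disc, Re(zf'(z)/f(z)) > α on Δ) and g is normalized locally univalent on Δ satisfying |zg''(z)/g'(z) − 2|z|²/(1−|z|²)| ≤ 2γ|z|/(1−|z|²), then T_g f(z) = ∫₀^z f(s)g'(s)ds satisfies Re(1 + z(T_g f)''(z)/(T_g f)'(z)) > 0 for all |z| < (γ − √(α² + γ² − 1))/(1 − α). -/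
/-!
Since `(T_g f)' = f g'`, the quantity `z (T_g f)''/(T_g f)'` is the sum of `z f'/f`, whose real
part exceeds `α`, and `z g''/g'`, whose real part is at least `2r(r - γ)/(1 - r²)` with `r = |z|`
by the hypothesis on `g`. Hence `Re(1 + z (T_g f)''/(T_g f)') > ((1 - α)r² - 2γr + 1 + α)/(1 - r²)`,
and the radius in the statement is the smaller root of this numerator.
-/

open Complex Metric Filter Topology

theorem logDeriv_deriv_of_hasDerivAt_mul {𝕜 : Type*} [NontriviallyNormedField 𝕜]
    {T F G : 𝕜 → 𝕜} {U : Set 𝕜} {z : 𝕜} (hU : U ∈ 𝓝 z)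
    (hT : ∀ w ∈ U, HasDerivAt T (F w * G w) w) (hF : DifferentiableAt 𝕜 F z)
    (hG : DifferentiableAt 𝕜 G z) (hFz : F z ≠ 0) (hGz : G z ≠ 0) :
    logDeriv (deriv T) z = logDeriv F z + logDeriv G z := by
  have hderiv : deriv T =ᶠ[𝓝 z] fun w => F w * G w :=
    eventually_of_mem hU fun w hw => (hT w hw).deriv
  rw [(logDeriv_congr_nhds hderiv).eq_of_nhds, logDeriv_mul z hFz hGz hF hG]

theorem Complex.sub_le_re_of_norm_sub_ofReal_le {v : ℂ} {c R : ℝ} (h : ‖v - c‖ ≤ R) :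
    c - R ≤ v.re := by
  have hre := (abs_le.mp ((abs_re_le_norm (v - c)).trans h)).1
  rw [sub_re, ofReal_re] at hre
  linarith

theorem quadratic_pos_of_lt_smaller_root {α γ r : ℝ} (hα : α < 1) (hdisc : 1 ≤ α ^ 2 + γ ^ 2)
    (hr : r < (γ - √(α ^ 2 + γ ^ 2 - 1)) / (1 - α)) :
    0 < (1 - α) * r ^ 2 - 2 * γ * r + (1 + α) := by
  set s := √(α ^ 2 + γ ^ 2 - 1)
  have hs : s ^ 2 = α ^ 2 + γ ^ 2 - 1 := Real.sq_sqrt (by linarith)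
  have hα' : 0 < 1 - α := by linarith
  have hlt : s < γ - (1 - α) * r := by
    rw [lt_div_iff₀ hα'] at hr
    linarith
  -- `(γ - (1 - α) r)² - s²` is `(1 - α)` times the quadratic.
  have hsq : s ^ 2 < (γ - (1 - α) * r) ^ 2 := by
    nlinarith [Real.sqrt_nonneg (α ^ 2 + γ ^ 2 - 1)]
  nlinarith

theorem one_add_add_div_pos_of_lt_smaller_root {α γ r : ℝ} (hα : α < 1)
    (hdisc : 1 ≤ α ^ 2 + γ ^ 2) (hr0 : 0 ≤ r) (hr1 : r < 1)
    (hr : r < (γ - √(α ^ 2 + γ ^ 2 - 1)) / (1 - α)) :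
    0 < 1 + α + (2 * r ^ 2 / (1 - r ^ 2) - 2 * γ * r / (1 - r ^ 2)) := by
  have hden : 0 < 1 - r ^ 2 := by nlinarith
  have hq := quadratic_pos_of_lt_smaller_root hα hdisc hr
  have hform : 1 + α + (2 * r ^ 2 / (1 - r ^ 2) - 2 * γ * r / (1 - r ^ 2)) =
      ((1 - α) * r ^ 2 - 2 * γ * r + (1 + α)) / (1 - r ^ 2) := by
    field_simp
    ring
  rw [hform]
  positivity

theorem stmt4_general (α γ : ℝ) (hα1 : α < 1) (hγ : 1 ≤ γ)
    (f : ℂ → ℂ) (hfd : DifferentiableOn ℂ f (ball (0:ℂ) 1))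
    (hfne : ∀ z ∈ ball (0:ℂ) 1, z ≠ 0 → f z ≠ 0)
    (hstar : ∀ z ∈ ball (0:ℂ) 1, z ≠ 0 → α < (z * deriv f z / f z).re)
    (g : ℂ → ℂ) (hgd : DifferentiableOn ℂ g (ball (0:ℂ) 1))
    (hgne : ∀ z ∈ ball (0:ℂ) 1, deriv g z ≠ 0)
    (hgbd : ∀ z ∈ ball (0:ℂ) 1,
      ‖z * deriv (deriv g) z / deriv g z - ((2 * ‖z‖^2 / (1 - ‖z‖^2) : ℝ) : ℂ)‖
        ≤ 2 * γ * ‖z‖ / (1 - ‖z‖^2))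
    (T : ℂ → ℂ) (hT : ∀ z ∈ ball (0:ℂ) 1, HasDerivAt T (f z * deriv g z) z) :
    ∀ z ∈ ball (0:ℂ) 1, ‖z‖ < (γ - Real.sqrt (α^2 + γ^2 - 1)) / (1 - α) →
      0 < (1 + z * deriv (deriv T) z / deriv T z).re := by
  intro z hz hzr
  rcases eq_or_ne z 0 with rfl | hz0
  · simp
  have hnhds : ball (0:ℂ) 1 ∈ 𝓝 z := isOpen_ball.mem_nhds hz
  have hg' : DifferentiableAt ℂ (deriv g) z :=
    ((hgd.analyticOnNhd isOpen_ball).deriv z hz).differentiableAt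
  have hlog := logDeriv_deriv_of_hasDerivAt_mul hnhds hT (hfd.differentiableAt hnhds) hg'
    (hfne z hz hz0) (hgne z hz)
  simp only [logDeriv_apply] at hlog
  have hsplit : z * deriv (deriv T) z / deriv T z =
      z * deriv f z / f z + z * deriv (deriv g) z / deriv g z := by
    rw [mul_div_assoc, hlog]
    ring
  have hu := hstar z hz hz0
  have hv := sub_le_re_of_norm_sub_ofReal_le (hgbd z hz)
  have hpos := one_add_add_div_pos_of_lt_smaller_root hα1 (by nlinarith) (norm_nonneg z)
    (mem_ball_zero_iff.mp hz) hzr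
  rw [hsplit, add_re, add_re, one_re]
  linarith

theorem stmt4 (α γ : ℝ) (hα0 : 0 ≤ α) (hα1 : α < 1) (hγ : 1 ≤ γ)
    (f : ℂ → ℂ) (hfd : DifferentiableOn ℂ f (ball (0:ℂ) 1))
    (hf0 : f 0 = 0) (hf1 : deriv f 0 = 1)
    (hfne : ∀ z ∈ ball (0:ℂ) 1, z ≠ 0 → f z ≠ 0)
    (hstar : ∀ z ∈ ball (0:ℂ) 1, z ≠ 0 → α < (z * deriv f z / f z).re)
    (g : ℂ → ℂ) (hgd : DifferentiableOn ℂ g (ball (0:ℂ) 1))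
    (hg0 : g 0 = 0) (hg1 : deriv g 0 = 1)
    (hgne : ∀ z ∈ ball (0:ℂ) 1, deriv g z ≠ 0)
    (hgbd : ∀ z ∈ ball (0:ℂ) 1,
      ‖z * deriv (deriv g) z / deriv g z - ((2 * ‖z‖^2 / (1 - ‖z‖^2) : ℝ) : ℂ)‖
        ≤ 2 * γ * ‖z‖ / (1 - ‖z‖^2))
    (T : ℂ → ℂ) (hT : ∀ z ∈ ball (0:ℂ) 1, HasDerivAt T (f z * deriv g z) z) :
    ∀ z ∈ ball (0:ℂ) 1, ‖z‖ < (γ - Real.sqrt (α^2 + γ^2 - 1)) / (1 - α) →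
      0 < (1 + z * deriv (deriv T) z / deriv T z).re :=
  stmt4_general α γ hα1 hγ f hfd hfne hstar g hgd hgne hgbd T hT
end

section
/- Let 0 ≤ α < 1. If f is starlike of order α on the unit disc and g is normalized analytic satisfying Re(1 + zg''(z)/g'(z)) ≥ (1 − 2r + r²)/(1 − r²) for |z| = r < 1, then T_g f(z) = ∫₀^z f(s)g'(s)ds is convex univalent on the whole unit disc: Re(1 + z(T_g f)''(z)/(T_g f)'(z)) > 0 for all |z| < 1. -/
/-! Since `(T_g f)' = f · g'`, logarithmic differentiation gives
`1 + z (T_g f)''/(T_g f)' = z f'/f + (1 + z g''/g')`. The first term has real part `> α ≥ 0`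
by starlikeness, the second has real part at least `(1 - r)² / (1 - r²) > 0`. -/

open Complex Metric Filter Topology

theorem one_add_mul_deriv_deriv_div_deriv_eq_of_deriv_eventuallyEq_mul
    {𝕜 : Type*} [NontriviallyNormedField 𝕜] {T f h : 𝕜 → 𝕜} {z : 𝕜}
    (hT : deriv T =ᶠ[𝓝 z] fun w => f w * h w)
    (hf : DifferentiableAt 𝕜 f z) (hh : DifferentiableAt 𝕜 h z)
    (hfz : f z ≠ 0) (hhz : h z ≠ 0) :
    1 + z * deriv (deriv T) z / deriv T z
      = z * deriv f z / f z + (1 + z * deriv h z / h z) := by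
  rw [hT.deriv_eq, deriv_fun_mul hf hh, hT.eq_of_nhds]
  field_simp
  ring

theorem stmt6_general (α : ℝ) (hα0 : 0 ≤ α)
    (f : ℂ → ℂ) (hfd : DifferentiableOn ℂ f (ball (0:ℂ) 1))
    (hfne : ∀ z ∈ ball (0:ℂ) 1, z ≠ 0 → f z ≠ 0)
    (hstar : ∀ z ∈ ball (0:ℂ) 1, z ≠ 0 → α < (z * deriv f z / f z).re)
    (g : ℂ → ℂ) (hgd : DifferentiableOn ℂ g (ball (0:ℂ) 1))
    (hgne : ∀ z ∈ ball (0:ℂ) 1, deriv g z ≠ 0)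
    (hgbd : ∀ z ∈ ball (0:ℂ) 1,
      (1 - 2 * ‖z‖ + ‖z‖^2) / (1 - ‖z‖^2)
        ≤ (1 + z * deriv (deriv g) z / deriv g z).re)
    (T : ℂ → ℂ) (hT : ∀ z ∈ ball (0:ℂ) 1, HasDerivAt T (f z * deriv g z) z) :
    ∀ z ∈ ball (0:ℂ) 1, 0 < (1 + z * deriv (deriv T) z / deriv T z).re := by
  intro z hz
  rcases eq_or_ne z 0 with rfl | hz0
  · simp
  have hnhds : ball (0:ℂ) 1 ∈ 𝓝 z := isOpen_ball.mem_nhds hz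
  have hT' : deriv T =ᶠ[𝓝 z] fun w => f w * deriv g w :=
    eventuallyEq_of_mem hnhds fun w hw => (hT w hw).deriv
  have hg' : DifferentiableAt ℂ (deriv g) z :=
    ((hgd.analyticOnNhd isOpen_ball).deriv z hz).differentiableAt
  rw [one_add_mul_deriv_deriv_div_deriv_eq_of_deriv_eventuallyEq_mul hT'
    (hfd.differentiableAt hnhds) hg' (hfne z hz hz0) (hgne z hz), add_re]
  have hr : ‖z‖ < 1 := mem_ball_zero_iff.mp hz
  have hbound_pos : 0 < (1 - 2 * ‖z‖ + ‖z‖^2) / (1 - ‖z‖^2) :=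
    div_pos (by nlinarith [norm_nonneg z]) (by nlinarith [norm_nonneg z])
  linarith [hstar z hz hz0, hgbd z hz]

theorem stmt6 (α : ℝ) (hα0 : 0 ≤ α) (hα1 : α < 1)
    (f : ℂ → ℂ) (hfd : DifferentiableOn ℂ f (ball (0:ℂ) 1))
    (hf0 : f 0 = 0) (hf1 : deriv f 0 = 1)
    (hfne : ∀ z ∈ ball (0:ℂ) 1, z ≠ 0 → f z ≠ 0)
    (hstar : ∀ z ∈ ball (0:ℂ) 1, z ≠ 0 → α < (z * deriv f z / f z).re)
    (g : ℂ → ℂ) (hgd : DifferentiableOn ℂ g (ball (0:ℂ) 1))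
    (hg0 : g 0 = 0) (hg1 : deriv g 0 = 1)
    (hgne : ∀ z ∈ ball (0:ℂ) 1, deriv g z ≠ 0)
    (hgbd : ∀ z ∈ ball (0:ℂ) 1,
      (1 - 2 * ‖z‖ + ‖z‖^2) / (1 - ‖z‖^2)
        ≤ (1 + z * deriv (deriv g) z / deriv g z).re)
    (T : ℂ → ℂ) (hT : ∀ z ∈ ball (0:ℂ) 1, HasDerivAt T (f z * deriv g z) z) :
    ∀ z ∈ ball (0:ℂ) 1, 0 < (1 + z * deriv (deriv T) z / deriv T z).re :=
  stmt6_general α hα0 f hfd hfne hstar g hgd hgne hgbd T hT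
end

section
/- Let 0 ≤ α < 1 and 0 < β ≤ 1. If f is starlike of order α on the unit disc and g is normalized locally univalent satisfying |g''(z)/g'(z)| ≤ β/(1 − |z|) on the unit disc, then T_g f(z) = ∫₀^z f(s)g'(s)ds satisfies Re(1 + z(T_g f)''(z)/(T_g f)'(z)) > 0 for all |z| < (1 + α)/(1 + α + β). -/
/-!
Since `(T_g f)' = f g'`, the quantity `z (T_g f)'' / (T_g f)'` splits as `z f'/f + z g''/g'`. The
first term has real part `> α` by starlikeness, the second has modulus `≤ β|z|/(1 - |z|)`, and
`β|z|/(1 - |z|) < 1 + α` exactly when `|z| < (1 + α)/(1 + α + β)`.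
-/

open Complex Metric Filter Topology

theorem logDeriv_deriv_of_hasDerivAt_mul_s9 {𝕜 : Type*} [NontriviallyNormedField 𝕜]
    {T u v : 𝕜 → 𝕜} {s : Set 𝕜} (hs : IsOpen s)
    (hT : ∀ w ∈ s, HasDerivAt T (u w * v w) w)
    {z : 𝕜} (hz : z ∈ s) (hu : DifferentiableAt 𝕜 u z) (hv : DifferentiableAt 𝕜 v z)
    (hu0 : u z ≠ 0) (hv0 : v z ≠ 0) :
    logDeriv (deriv T) z = logDeriv u z + logDeriv v z := by
  have hderiv : deriv T =ᶠ[𝓝 z] fun w => u w * v w :=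
    eventually_of_mem (hs.mem_nhds hz) fun w hw => (hT w hw).deriv
  rw [(logDeriv_congr_nhds hderiv).eq_of_nhds, logDeriv_mul z hu0 hv0 hu hv]

theorem Complex.neg_mul_le_re_mul_of_norm_le {w : ℂ} {c : ℝ} (z : ℂ) (hw : ‖w‖ ≤ c) :
    -(‖z‖ * c) ≤ (z * w).re := by
  have hzw : ‖z * w‖ ≤ ‖z‖ * c := by
    rw [norm_mul]
    exact mul_le_mul_of_nonneg_left hw (norm_nonneg z)
  linarith [(abs_le.1 (abs_re_le_norm (z * w))).1]

theorem mul_div_one_sub_lt_of_lt_div {a b r : ℝ} (ha : 0 < a) (hb : 0 ≤ b) (hr0 : 0 ≤ r)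
    (hr : r < a / (a + b)) : r * (b / (1 - r)) < a := by
  rw [lt_div_iff₀ (by linarith)] at hr
  have hr1 : r < 1 := by nlinarith
  rw [mul_div_assoc', div_lt_iff₀ (by linarith)]
  linarith

theorem stmt9_general (α β : ℝ) (hα0 : 0 ≤ α) (hβ0 : 0 < β)
    (f : ℂ → ℂ) (hfd : DifferentiableOn ℂ f (ball (0:ℂ) 1))
    (hfne : ∀ z ∈ ball (0:ℂ) 1, z ≠ 0 → f z ≠ 0)
    (hstar : ∀ z ∈ ball (0:ℂ) 1, z ≠ 0 → α < (z * deriv f z / f z).re)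
    (g : ℂ → ℂ) (hgd : DifferentiableOn ℂ g (ball (0:ℂ) 1))
    (hgne : ∀ z ∈ ball (0:ℂ) 1, deriv g z ≠ 0)
    (hgbd : ∀ z ∈ ball (0:ℂ) 1, ‖deriv (deriv g) z / deriv g z‖ ≤ β / (1 - ‖z‖))
    (T : ℂ → ℂ) (hT : ∀ z ∈ ball (0:ℂ) 1, HasDerivAt T (f z * deriv g z) z) :
    ∀ z ∈ ball (0:ℂ) 1, ‖z‖ < (1 + α) / (1 + α + β) →
      0 < (1 + z * deriv (deriv T) z / deriv T z).re := by
  intro z hz hzr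
  rcases eq_or_ne z 0 with rfl | hz0
  · simp
  have hfz : DifferentiableAt ℂ f z := hfd.differentiableAt (isOpen_ball.mem_nhds hz)
  have hg'z : DifferentiableAt ℂ (deriv g) z :=
    ((hgd.analyticOnNhd isOpen_ball).deriv z hz).differentiableAt
  have hsplit :
      z * deriv (deriv T) z / deriv T z = z * logDeriv f z + z * logDeriv (deriv g) z := by
    rw [mul_div_assoc, ← logDeriv_apply, ← mul_add,
      logDeriv_deriv_of_hasDerivAt_mul_s9 isOpen_ball hT hz hfz hg'z (hfne z hz hz0) (hgne z hz)]
  have hf_re : α < (z * logDeriv f z).re := by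
    simpa only [logDeriv_apply, mul_div_assoc] using hstar z hz hz0
  have hg_re : -(‖z‖ * (β / (1 - ‖z‖))) ≤ (z * logDeriv (deriv g) z).re :=
    neg_mul_le_re_mul_of_norm_le z (hgbd z hz)
  have hradius : ‖z‖ * (β / (1 - ‖z‖)) < 1 + α :=
    mul_div_one_sub_lt_of_lt_div (by linarith) hβ0.le (norm_nonneg z) hzr
  rw [hsplit, add_re, add_re, one_re]
  linarith

theorem stmt9 (α β : ℝ) (hα0 : 0 ≤ α) (hα1 : α < 1) (hβ0 : 0 < β) (hβ1 : β ≤ 1)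
    (f : ℂ → ℂ) (hfd : DifferentiableOn ℂ f (ball (0:ℂ) 1))
    (hf0 : f 0 = 0) (hf1 : deriv f 0 = 1)
    (hfne : ∀ z ∈ ball (0:ℂ) 1, z ≠ 0 → f z ≠ 0)
    (hstar : ∀ z ∈ ball (0:ℂ) 1, z ≠ 0 → α < (z * deriv f z / f z).re)
    (g : ℂ → ℂ) (hgd : DifferentiableOn ℂ g (ball (0:ℂ) 1))
    (hg0 : g 0 = 0) (hg1 : deriv g 0 = 1)
    (hgne : ∀ z ∈ ball (0:ℂ) 1, deriv g z ≠ 0)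
    (hgbd : ∀ z ∈ ball (0:ℂ) 1, ‖deriv (deriv g) z / deriv g z‖ ≤ β / (1 - ‖z‖))
    (T : ℂ → ℂ) (hT : ∀ z ∈ ball (0:ℂ) 1, HasDerivAt T (f z * deriv g z) z) :
    ∀ z ∈ ball (0:ℂ) 1, ‖z‖ < (1 + α) / (1 + α + β) →
      0 < (1 + z * deriv (deriv T) z / deriv T z).re :=
  stmt9_general α β hα0 hβ0 f hfd hfne hstar g hgd hgne hgbd T hT
end

section
/- Let 0 ≤ α < 1 and k ≥ 2. If f is starlike of order α on the unit disc and g is normalized locally univalent satisfying |zg''(z)/g'(z) − 2|z|²/(1−|z|²)| ≤ k|z|/(1−|z|²) on the unit disc, then T_g f(z) = ∫₀^z f(s)g'(s)ds satisfies Re(1 + z(T_g f)''(z)/(T_g f)'(z)) > 0 for all |z| < (k − √(k² − 4(1−α²)))/(2(1−α)). -/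
/-!
Since `(T_g f)' = f g'`, the quantity `z (T_g f)''/(T_g f)'` splits as `z f'/f + z g''/g'`.
Starlikeness bounds the real part of the first term below by `α`, and the hypothesis on `g`
bounds that of the second below by `(2r² - kr)/(1 - r²)`, `r = |z|`. So the real part of
`1 + z (T_g f)''/(T_g f)'` exceeds `((1 - α)r² - kr + 1 + α)/(1 - r²)`, whose numerator is
positive to the left of its smaller root.
-/

open Complex Metric Filter Topology

theorem quadratic_pos_of_lt_smaller_root_s10 {a b c x : ℝ} (ha : 0 < a)
    (hx : x < (b - √(b ^ 2 - 4 * a * c)) / (2 * a)) : 0 < a * x ^ 2 - b * x + c := by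
  have hroot : √(b ^ 2 - 4 * a * c) < b - 2 * a * x := by
    rw [lt_div_iff₀ (by positivity)] at hx
    linarith
  have hsq : b ^ 2 - 4 * a * c < (b - 2 * a * x) ^ 2 :=
    calc b ^ 2 - 4 * a * c ≤ √(b ^ 2 - 4 * a * c) ^ 2 :=
          (le_max_left _ _).trans_eq Real.sq_sqrt'.symm
      _ < (b - 2 * a * x) ^ 2 := by gcongr
  nlinarith

theorem le_re_of_norm_sub_ofReal_le {w : ℂ} {c R : ℝ} (h : ‖w - c‖ ≤ R) : c - R ≤ w.re := by
  have := (abs_le.mp ((abs_re_le_norm _).trans h)).1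
  rw [sub_re, ofReal_re] at this
  linarith

theorem logDeriv_deriv_of_hasDerivAt_mul_s10 {𝕜 : Type*} [NontriviallyNormedField 𝕜]
    {T f h : 𝕜 → 𝕜} {z : 𝕜}
    (hT : ∀ᶠ w in 𝓝 z, HasDerivAt T (f w * h w) w)
    (hf : DifferentiableAt 𝕜 f z) (hh : DifferentiableAt 𝕜 h z) (hfz : f z ≠ 0) (hhz : h z ≠ 0) :
    logDeriv (deriv T) z = logDeriv f z + logDeriv h z := by
  have hT' : deriv T =ᶠ[𝓝 z] fun w => f w * h w := hT.mono fun w hw => hw.deriv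
  rw [logDeriv_apply, hT'.deriv_eq, hT'.eq_of_nhds, ← logDeriv_apply,
    logDeriv_mul z hfz hhz hf hh]

theorem stmt10_general (α k : ℝ) (hα1 : α < 1)
    (f : ℂ → ℂ) (hfd : DifferentiableOn ℂ f (ball (0:ℂ) 1))
    (hfne : ∀ z ∈ ball (0:ℂ) 1, z ≠ 0 → f z ≠ 0)
    (hstar : ∀ z ∈ ball (0:ℂ) 1, z ≠ 0 → α < (z * deriv f z / f z).re)
    (g : ℂ → ℂ) (hgd : DifferentiableOn ℂ g (ball (0:ℂ) 1))
    (hgne : ∀ z ∈ ball (0:ℂ) 1, deriv g z ≠ 0)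
    (hgbd : ∀ z ∈ ball (0:ℂ) 1,
      ‖z * deriv (deriv g) z / deriv g z - ((2 * ‖z‖^2 / (1 - ‖z‖^2) : ℝ) : ℂ)‖
        ≤ k * ‖z‖ / (1 - ‖z‖^2))
    (T : ℂ → ℂ) (hT : ∀ z ∈ ball (0:ℂ) 1, HasDerivAt T (f z * deriv g z) z) :
    ∀ z ∈ ball (0:ℂ) 1, ‖z‖ < (k - Real.sqrt (k^2 - 4 * (1 - α^2))) / (2 * (1 - α)) →
      0 < (1 + z * deriv (deriv T) z / deriv T z).re := by
  intro z hz hzr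
  rcases eq_or_ne z 0 with rfl | hz0
  · simp
  have hnhds : ball (0:ℂ) 1 ∈ 𝓝 z := isOpen_ball.mem_nhds hz
  have hsplit : z * deriv (deriv T) z / deriv T z
      = z * deriv f z / f z + z * deriv (deriv g) z / deriv g z := by
    have := logDeriv_deriv_of_hasDerivAt_mul_s10 (eventually_of_mem hnhds hT)
      (hfd.differentiableAt hnhds) ((hgd.deriv isOpen_ball).differentiableAt hnhds)
      (hfne z hz hz0) (hgne z hz)
    simp only [logDeriv_apply] at this
    rw [mul_div_assoc, this]
    ring
  set r := ‖z‖
  have hr : 0 < 1 - r ^ 2 := by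
    have : r < 1 := mem_ball_zero_iff.mp hz
    nlinarith [norm_nonneg z]
  have hq : 0 < (1 - α) * r ^ 2 - k * r + (1 + α) :=
    quadratic_pos_of_lt_smaller_root_s10 (sub_pos.mpr hα1) (by convert hzr using 4; ring)
  have hg := le_re_of_norm_sub_ofReal_le (hgbd z hz)
  have hbound : 0 < 1 + α + (2 * r ^ 2 / (1 - r ^ 2) - k * r / (1 - r ^ 2)) :=
    calc 0 < ((1 - α) * r ^ 2 - k * r + (1 + α)) / (1 - r ^ 2) := div_pos hq hr
      _ = _ := by field_simp; ring
  rw [hsplit, add_re, add_re, one_re]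
  linarith [hstar z hz hz0]

theorem stmt10 (α k : ℝ) (hα0 : 0 ≤ α) (hα1 : α < 1) (hk : 2 ≤ k)
    (f : ℂ → ℂ) (hfd : DifferentiableOn ℂ f (ball (0:ℂ) 1))
    (hf0 : f 0 = 0) (hf1 : deriv f 0 = 1)
    (hfne : ∀ z ∈ ball (0:ℂ) 1, z ≠ 0 → f z ≠ 0)
    (hstar : ∀ z ∈ ball (0:ℂ) 1, z ≠ 0 → α < (z * deriv f z / f z).re)
    (g : ℂ → ℂ) (hgd : DifferentiableOn ℂ g (ball (0:ℂ) 1))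
    (hg0 : g 0 = 0) (hg1 : deriv g 0 = 1)
    (hgne : ∀ z ∈ ball (0:ℂ) 1, deriv g z ≠ 0)
    (hgbd : ∀ z ∈ ball (0:ℂ) 1,
      ‖z * deriv (deriv g) z / deriv g z - ((2 * ‖z‖^2 / (1 - ‖z‖^2) : ℝ) : ℂ)‖
        ≤ k * ‖z‖ / (1 - ‖z‖^2))
    (T : ℂ → ℂ) (hT : ∀ z ∈ ball (0:ℂ) 1, HasDerivAt T (f z * deriv g z) z) :
    ∀ z ∈ ball (0:ℂ) 1, ‖z‖ < (k - Real.sqrt (k^2 - 4 * (1 - α^2))) / (2 * (1 - α)) →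
      0 < (1 + z * deriv (deriv T) z / deriv T z).re :=
  stmt10_general α k hα1 f hfd hfne hstar g hgd hgne hgbd T hT
end

section
/- Suppose f is analytic, nonvanishing on the punctured unit disc, with f(0)=0, f'(0)=1, and zf'/f ≺ (1+Az)/(1+Bz) for complex A, B with |A|>1, |B|≤1. Then for any 0 ≤ α < 1 and |z| = r < 1, Re(zf'(z)/f(z)) − α ≥ (1 − α − |B−A|r − (Re(A·conj(B)) − α|B|²)r²)/(1 − |B|²r²). -/
/-!
By the Schwarz lemma the subordinating function `ω` satisfies `|ω(z)| ≤ |z| = r`, so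
`z f'(z) / f(z) = (1 + A ω(z)) / (1 + B ω(z))` lies in the image of the closed disc `|w| ≤ r`
under the Möbius map `w ↦ (1 + A w) / (1 + B w)`. That image is the disc with centre
`(1 - A B̄ r²) / (1 - |B|² r²)` and radius `|A - B| r / (1 - |B|² r²)`, and the bound is the
smallest real part on this disc.
-/

open Complex Metric ComplexConjugate

lemma one_sub_sq_mul_sq_pos {a r : ℝ} (ha : 0 ≤ a) (hr : 0 ≤ r) (h : a * r < 1) :
    0 < 1 - a ^ 2 * r ^ 2 := by
  rw [← mul_pow]
  exact sub_pos.mpr (pow_lt_one₀ (mul_nonneg ha hr) h two_ne_zero)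

namespace Complex

lemma normSq_add_conj_mul_sub_normSq_one_add_mul (B w : ℂ) (r : ℝ) :
    normSq (w + conj B * (r : ℂ) ^ 2) - r ^ 2 * normSq (1 + B * w)
      = (normSq w - r ^ 2) * (1 - normSq B * r ^ 2) := by
  simp only [normSq_apply, add_re, add_im, mul_re, mul_im, one_re, one_im, conj_re, conj_im,
    pow_two, ofReal_re, ofReal_im]
  ring

lemma norm_add_conj_mul_le {B w : ℂ} {r : ℝ} (hw : ‖w‖ ≤ r) (hBr : ‖B‖ * r ≤ 1) :
    ‖w + conj B * (r : ℂ) ^ 2‖ ≤ r * ‖1 + B * w‖ := by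
  have hr : 0 ≤ r := (norm_nonneg w).trans hw
  have hwr : normSq w ≤ r ^ 2 := by
    rw [← Complex.sq_norm]; exact pow_le_pow_left₀ (norm_nonneg w) hw 2
  have hBr' : normSq B * r ^ 2 ≤ 1 := by
    rw [← Complex.sq_norm, ← mul_pow]; exact pow_le_one₀ (by positivity) hBr
  have hsq : normSq (w + conj B * (r : ℂ) ^ 2) ≤ r ^ 2 * normSq (1 + B * w) := by
    have := normSq_add_conj_mul_sub_normSq_one_add_mul B w r
    nlinarith [mul_nonneg (sub_nonneg.mpr hwr) (sub_nonneg.mpr hBr')]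
  rw [← Complex.sq_norm, ← Complex.sq_norm, ← mul_pow] at hsq
  exact (pow_le_pow_iff_left₀ (norm_nonneg _) (by positivity) two_ne_zero).mp hsq

lemma mul_moebius_sub_eq {A B w : ℂ} (r : ℝ) (hw : 1 + B * w ≠ 0) :
    (1 - B * conj B * (r : ℂ) ^ 2) * ((1 + A * w) / (1 + B * w)) - (1 - A * conj B * (r : ℂ) ^ 2)
      = (A - B) * (w + conj B * (r : ℂ) ^ 2) / (1 + B * w) := by
  field_simp
  ring

lemma norm_mul_moebius_sub_le {A B w : ℂ} {r : ℝ} (hw : ‖w‖ ≤ r) (hBr : ‖B‖ * r < 1) :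
    ‖(1 - B * conj B * (r : ℂ) ^ 2) * ((1 + A * w) / (1 + B * w))
        - (1 - A * conj B * (r : ℂ) ^ 2)‖ ≤ ‖A - B‖ * r := by
  have hBw : ‖B * w‖ < 1 := by
    rw [norm_mul]
    exact (mul_le_mul_of_nonneg_left hw (norm_nonneg B)).trans_lt hBr
  have hden : 1 + B * w ≠ 0 := by
    intro h
    rw [eq_neg_of_add_eq_zero_right h, norm_neg, norm_one] at hBw
    exact lt_irrefl _ hBw
  rw [mul_moebius_sub_eq r hden, norm_div, norm_mul, div_le_iff₀ (norm_pos_iff.mpr hden),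
    mul_assoc]
  exact mul_le_mul_of_nonneg_left (norm_add_conj_mul_le hw hBr.le) (norm_nonneg _)

lemma le_re_moebius {A B w : ℂ} {r : ℝ} (hw : ‖w‖ ≤ r) (hBr : ‖B‖ * r < 1) :
    (1 - (A * conj B).re * r ^ 2 - ‖A - B‖ * r) / (1 - ‖B‖ ^ 2 * r ^ 2)
      ≤ ((1 + A * w) / (1 + B * w)).re := by
  have hD := one_sub_sq_mul_sq_pos (norm_nonneg B) ((norm_nonneg w).trans hw) hBr
  have hBB : 1 - B * conj B * (r : ℂ) ^ 2 = ((1 - ‖B‖ ^ 2 * r ^ 2 : ℝ) : ℂ) := by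
    rw [mul_conj']; push_cast; ring
  have hAB : (A * conj B * (r : ℂ) ^ 2).re = (A * conj B).re * r ^ 2 := by
    rw [← ofReal_pow, re_mul_ofReal]
  have hre := (abs_re_le_norm _).trans (norm_mul_moebius_sub_le (A := A) hw hBr)
  rw [hBB, abs_le, sub_re, re_ofReal_mul, sub_re, one_re, hAB] at hre
  rw [div_le_iff₀ hD]
  linarith

end Complex

theorem stmt16_general (A B : ℂ) (hB : ‖B‖ ≤ 1)
    (α : ℝ)
    (f : ℂ → ℂ)
    (hsub : ∃ ω : ℂ → ℂ, DifferentiableOn ℂ ω (ball (0:ℂ) 1) ∧ ω 0 = 0 ∧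
      (∀ z ∈ ball (0:ℂ) 1, ω z ∈ ball (0:ℂ) 1) ∧
      ∀ z ∈ ball (0:ℂ) 1, z ≠ 0 →
        z * deriv f z / f z = (1 + A * ω z) / (1 + B * ω z)) :
    ∀ z ∈ ball (0:ℂ) 1, z ≠ 0 →
      (1 - α - ‖B - A‖ * ‖z‖ - ((A * (starRingEnd ℂ) B).re - α * ‖B‖^2) * ‖z‖^2)
          / (1 - ‖B‖^2 * ‖z‖^2)
        ≤ (z * deriv f z / f z).re - α := by
  obtain ⟨ω, hωd, hω0, hωmaps, hωeq⟩ := hsub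
  intro z hz hz0
  have hz1 : ‖z‖ < 1 := mem_ball_zero_iff.mp hz
  have hωz : ‖ω z‖ ≤ ‖z‖ :=
    norm_le_norm_of_mapsTo_ball hωd (fun u hu => ball_subset_closedBall (hωmaps u hu)) hω0
      (by simpa using hz1)
  have hBz : ‖B‖ * ‖z‖ < 1 := (mul_le_of_le_one_left (norm_nonneg z) hB).trans_lt hz1
  have hD := (one_sub_sq_mul_sq_pos (norm_nonneg B) (norm_nonneg z) hBz).ne'
  rw [hωeq z hz hz0]
  refine le_trans (le_of_eq ?_) (sub_le_sub_right (le_re_moebius hωz hBz) α)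
  rw [norm_sub_rev, eq_sub_iff_add_eq, div_add' _ _ _ hD]
  ring

theorem stmt16 (A B : ℂ) (hA : 1 < ‖A‖) (hB : ‖B‖ ≤ 1)
    (α : ℝ) (hα0 : 0 ≤ α) (hα1 : α < 1)
    (f : ℂ → ℂ) (hfd : DifferentiableOn ℂ f (ball (0:ℂ) 1))
    (hf0 : f 0 = 0) (hf1 : deriv f 0 = 1)
    (hfne : ∀ z ∈ ball (0:ℂ) 1, z ≠ 0 → f z ≠ 0)
    (hsub : ∃ ω : ℂ → ℂ, DifferentiableOn ℂ ω (ball (0:ℂ) 1) ∧ ω 0 = 0 ∧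
      (∀ z ∈ ball (0:ℂ) 1, ω z ∈ ball (0:ℂ) 1) ∧
      ∀ z ∈ ball (0:ℂ) 1, z ≠ 0 →
        z * deriv f z / f z = (1 + A * ω z) / (1 + B * ω z)) :
    ∀ z ∈ ball (0:ℂ) 1, z ≠ 0 →
      (1 - α - ‖B - A‖ * ‖z‖ - ((A * (starRingEnd ℂ) B).re - α * ‖B‖^2) * ‖z‖^2)
          / (1 - ‖B‖^2 * ‖z‖^2)
        ≤ (z * deriv f z / f z).re - α :=
  stmt16_general A B hB α f hsub
end
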